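/- arXiv:1305.6074 — 2 statements merged into one kernel-verified Lean document; each statement's English description precedes it below -/
import Mathlib

section
/- Point-wise union does not preserve rationality: for the RSRL R = (L(δ₁δ₂*), φ) with φ(δ₁) = {a} and φ(δ₂) = {a, ε}, and the regular language Q = {b}, the set R ⊍ Q = { L ∪ {b} | L ∈ R } = { {b} ∪ { aⁱ | 1 ≤ i ≤ n+1 } | n ∈ ℕ } is not a rational set of regular languages. -/
open Language Computability

/-- A substitution mapping symbols to languages, extended multiplicatively to words. -/
def phiW {Δ A : Type} (φ : Δ → Language A) (w : List Δ) : Language A :=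
  (w.map φ).prod

/-- Image of a language of words under the extended substitution. -/
def phiL {Δ A : Type} (φ : Δ → Language A) (L : Set (List Δ)) : Language A :=
  ⋃ w ∈ L, phiW φ w

/-- The set of languages generated by a generator language `K` and substitution `φ`. -/
def RSet {Δ A : Type} (φ : Δ → Language A) (K : Language Δ) : Set (Language A) :=
  { L | ∃ w ∈ K, phiW φ w = L }

/-- Rational sets of regular languages. -/
def IsRSRL {A : Type} (R : Set (Language A)) : Prop :=
  ∃ (Δ : Type) (_ : Fintype Δ) (K : Language Δ) (φ : Δ → Language A),
    K.IsRegular ∧ ([] : List Δ) ∉ K ∧ (∀ δ, (φ δ).IsRegular) ∧ R = RSet φ K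

/-! With `a = 0` and `b = 1`, every member of the family `{b} ∪ {aⁱ | 1 ≤ i ≤ n + 1}` contains
the word `b`, and `b` is the only word of the member in which the letter `b` occurs. If such a
language is a product `L₁ * L₂`, one factor is `{ε}`: otherwise a nonempty word of the factor
that contributes `ε` to `b` could be put in its place, giving a longer word containing `b`.
Hence every member of `RSet φ K` with this property is `φ δ` for a single symbol `δ`, so a
rational set of such languages is finite, whereas the family above is infinite. -/

section Substitution

variable {Δ A : Type} (φ : Δ → Language A)

theorem phiW_nil : phiW φ [] = 1 := rfl

theorem phiW_cons (d : Δ) (w : List Δ) : phiW φ (d :: w) = φ d * phiW φ w := by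
  simp [phiW]

end Substitution

section IsolatedLetter

variable {A : Type}

def IsolatedLetter (c : A) (L : Language A) : Prop :=
  [c] ∈ L ∧ ∀ w ∈ L, c ∈ w → w = [c]

theorem eq_one_of_forall_eq_nil {L : Language A} {a : List A} (ha : a ∈ L)
    (h : ∀ x ∈ L, x = []) : L = 1 := by
  ext x
  rw [Language.mem_one]
  exact ⟨h x, fun hx => hx ▸ h a ha ▸ ha⟩

theorem IsolatedLetter.mul_eq_one {c : A} {L₁ L₂ : Language A}
    (h : IsolatedLetter c (L₁ * L₂)) : L₁ = 1 ∨ L₂ = 1 := by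
  obtain ⟨x₁, hx₁, x₂, hx₂, hx⟩ := Language.mem_mul.mp h.1
  suffices (∀ y ∈ L₁, y = []) ∨ (∀ y ∈ L₂, y = []) from
    this.imp (eq_one_of_forall_eq_nil hx₁) (eq_one_of_forall_eq_nil hx₂)
  by_contra! ⟨⟨y₁, hy₁, hy₁ne⟩, ⟨y₂, hy₂, hy₂ne⟩⟩
  rcases List.append_eq_singleton_iff.mp hx with ⟨rfl, rfl⟩ | ⟨rfl, rfl⟩
  · have := h.2 _ (Language.append_mem_mul hy₁ hx₂) (by simp)
    simp_all
  · have := h.2 _ (Language.append_mem_mul hx₁ hy₂) (by simp)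
    simp_all

theorem IsolatedLetter.phiW_mem_range {Δ : Type} {φ : Δ → Language A} {c : A} {w : List Δ}
    (h : IsolatedLetter c (phiW φ w)) : phiW φ w ∈ Set.range φ := by
  induction w with
  | nil => exact absurd h.1 (by simp [phiW_nil, Language.mem_one])
  | cons d w ih =>
    rw [phiW_cons] at h ⊢
    rcases h.mul_eq_one with hd | hw
    · rw [hd, one_mul] at h ⊢
      exact ih h
    · rw [hw, mul_one]
      exact ⟨d, rfl⟩

theorem IsRSRL.finite_of_isolatedLetter {R : Set (Language A)} (hR : IsRSRL R) {c : A}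
    (hc : ∀ L ∈ R, IsolatedLetter c L) : R.Finite := by
  obtain ⟨Δ, _, K, φ, -, -, -, rfl⟩ := hR
  refine (Set.finite_range φ).subset ?_
  rintro _ ⟨w, hw, rfl⟩
  exact (hc _ ⟨w, hw, rfl⟩).phiW_mem_range

end IsolatedLetter

namespace PointwiseUnionExample

def φ : Fin 2 → Language (Fin 2) :=
  fun δ => if δ = 0 then {[0]} else {[], [0]}

def K : Language (Fin 2) :=
  {[0]} * ({[1]} : Language (Fin 2))∗

def Ln (n : ℕ) : Language (Fin 2) :=
  { w | w = [1] ∨ ∃ i : ℕ, 1 ≤ i ∧ i ≤ n + 1 ∧ w = List.replicate i 0 }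

theorem mem_K_iff (w : List (Fin 2)) : w ∈ K ↔ ∃ n : ℕ, w = 0 :: List.replicate n 1 := by
  have hstar : ∀ v : List (Fin 2), v ∈ ({[1]} : Language (Fin 2))∗ ↔
      ∃ n, v = List.replicate n 1 := by
    intro v
    refine Language.mem_kstar.trans ⟨?_, ?_⟩
    · rintro ⟨S, rfl, hS⟩
      refine ⟨S.length, ?_⟩
      rw [List.eq_replicate_iff.mpr ⟨rfl, hS⟩, List.flatten_replicate_singleton,
        List.length_replicate]
    · rintro ⟨n, rfl⟩
      exact ⟨List.replicate n [1], List.flatten_replicate_singleton.symm,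
        fun y hy => List.eq_of_mem_replicate hy⟩
  simp only [K, Language.mem_mul, hstar]
  constructor
  · rintro ⟨_, rfl, _, ⟨n, rfl⟩, rfl⟩
    exact ⟨n, rfl⟩
  · rintro ⟨n, rfl⟩
    exact ⟨[0], rfl, _, ⟨n, rfl⟩, rfl⟩

theorem phiW_replicate_one (n : ℕ) :
    phiW φ (List.replicate n 1) =
      ({w | ∃ i ≤ n, w = List.replicate i 0} : Language (Fin 2)) := by
  induction n with
  | zero =>
    ext w
    simp only [List.replicate_zero, phiW_nil, Language.mem_one]
    exact ⟨fun h => ⟨0, le_rfl, h⟩, fun ⟨i, hi, h⟩ => by simp_all⟩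
  | succ n ih =>
    ext w
    rw [List.replicate_succ, phiW_cons, ih]
    refine Language.mem_mul.trans ?_
    constructor
    · rintro ⟨a, rfl | rfl, _, ⟨i, hi, rfl⟩, rfl⟩
      · exact ⟨i, by omega, rfl⟩
      · exact ⟨i + 1, by omega, rfl⟩
    · rintro ⟨i, hi, rfl⟩
      rcases Nat.lt_or_ge i (n + 1) with hi' | hi'
      · exact ⟨[], Or.inl rfl, _, ⟨i, by omega, rfl⟩, rfl⟩
      · obtain rfl : i = n + 1 := by omega
        exact ⟨[0], Or.inr rfl, _, ⟨n, le_rfl, rfl⟩, rfl⟩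

theorem phiW_zero_cons_replicate_add_singleton (n : ℕ) :
    phiW φ (0 :: List.replicate n 1) + {[1]} = Ln n := by
  ext w
  rw [phiW_cons, phiW_replicate_one, Language.mem_add, or_comm]
  refine or_congr Iff.rfl (Language.mem_mul.trans ⟨?_, ?_⟩)
  · rintro ⟨_, rfl, _, ⟨i, hi, rfl⟩, rfl⟩
    exact ⟨i + 1, by omega, by omega, rfl⟩
  · rintro ⟨_ | i, hi, hin, rfl⟩
    · omega
    · exact ⟨[0], rfl, _, ⟨i, by omega, rfl⟩, rfl⟩

theorem isolatedLetter_Ln (n : ℕ) : IsolatedLetter 1 (Ln n) := by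
  refine ⟨Or.inl rfl, ?_⟩
  rintro w (rfl | ⟨i, -, -, rfl⟩) h1
  · rfl
  · exact absurd (List.eq_of_mem_replicate h1) (by decide)

theorem Ln_injective : Function.Injective Ln := by
  have hle : ∀ m n, Ln m = Ln n → m ≤ n := by
    intro m n h
    have : List.replicate (m + 1) 0 ∈ Ln n := h ▸ Or.inr ⟨m + 1, le_add_self, le_rfl, rfl⟩
    rcases this with h | ⟨i, -, hi, h⟩
    · simp [List.replicate_succ] at h
    · have := congrArg List.length h
      simp only [List.length_replicate] at this
      omega
  exact fun m n h => le_antisymm (hle m n h) (hle n m h.symm)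

theorem image_add_singleton :
    { L' | ∃ L ∈ RSet φ K, L' = L + {[1]} } = { L | ∃ n, L = Ln n } := by
  ext L'
  constructor
  · rintro ⟨_, ⟨w, hw, rfl⟩, rfl⟩
    obtain ⟨n, rfl⟩ := (mem_K_iff w).1 hw
    exact ⟨n, phiW_zero_cons_replicate_add_singleton n⟩
  · rintro ⟨n, rfl⟩
    exact ⟨_, ⟨_, (mem_K_iff _).2 ⟨n, rfl⟩, rfl⟩,
      (phiW_zero_cons_replicate_add_singleton n).symm⟩

end PointwiseUnionExample

open PointwiseUnionExample in
/-- Point-wise union does not preserve rationality: for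
`R = (δ₁δ₂*, φ)` with `φ(δ₁) = {a}`, `φ(δ₂) = {a, ε}` and `Q = {b}`,
the set `{ L ∪ {b} | L ∈ R } = { {b} ∪ {aⁱ | 1 ≤ i ≤ n+1} | n ∈ ℕ }`
is not an RSRL (`a = 0`, `b = 1`, `δ₁ = 0`, `δ₂ = 1`). -/
theorem stmt14 :
    { L' : Language (Fin 2) |
        ∃ L ∈ RSet (fun δ : Fin 2 => if δ = 0 then ({[(0 : Fin 2)]} : Language (Fin 2))
                      else ({[], [(0 : Fin 2)]} : Language (Fin 2)))
              (({[(0 : Fin 2)]} : Language (Fin 2)) * ({[(1 : Fin 2)]} : Language (Fin 2))∗),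
          L' = L + ({[(1 : Fin 2)]} : Language (Fin 2)) } =
      { L : Language (Fin 2) | ∃ n : ℕ,
          L = { w | w = [(1 : Fin 2)] ∨
                ∃ i : ℕ, 1 ≤ i ∧ i ≤ n + 1 ∧ w = List.replicate i (0 : Fin 2) } } ∧
    ¬ IsRSRL { L : Language (Fin 2) | ∃ n : ℕ,
        L = { w | w = [(1 : Fin 2)] ∨
              ∃ i : ℕ, 1 ≤ i ∧ i ≤ n + 1 ∧ w = List.replicate i (0 : Fin 2) } } := by
  refine ⟨image_add_singleton, fun hR => ?_⟩
  have hfin := hR.finite_of_isolatedLetter (c := 1)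
    (by rintro _ ⟨n, rfl⟩; exact isolatedLetter_Ln n)
  exact Set.infinite_of_injective_forall_mem (s := {L | ∃ n, L = Ln n}) Ln_injective
    (fun n => ⟨n, rfl⟩) hfin
end

section
/- Let L = N₁S₁*N₂⋯N_mS_m*N_{m+1} where each N_h ∈ Δ* is a fixed word and each S_h ⊆ Δ* is a language, and let φ be a substitution into languages over Σ with ε ∈ φ(w) for every w ∈ S_h and every h. Then L has 1-word summaries under φ: for every finite F ⊆ L there is w ∈ L with φ(F) ⊆ φ(w). -/
open Language Computability

/-- A set of words `M'` has 1-word summaries under `φ` if every finite subset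
`F ⊆ M'` is summarized by a single word `w ∈ M'` with `φ(F) ⊆ φ(w)`. -/
def OneWordSummaries {Δ A : Type} (φ : Δ → Language A) (M' : Set (List Δ)) : Prop :=
  ∀ F ⊆ M', F.Finite → ∃ w ∈ M', phiL φ F ≤ phiW φ w

/-!
Order words by `u ≼ v ↔ φ(u) ⊆ φ(v)`. A language has 1-word summaries exactly when it is
nonempty and directed for `≼`. Singletons are trivially directed; `S∗` is directed because
`u, v ≼ uv` as soon as `ε ∈ φ(u)` and `ε ∈ φ(v)`; and since `φ` is multiplicative and
concatenation of languages is monotone, directedness passes to products of languages.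
-/

section

variable {Δ A : Type} {φ : Δ → Language A}

@[simp]
lemma phiW_append (φ : Δ → Language A) (u v : List Δ) :
    phiW φ (u ++ v) = phiW φ u * phiW φ v := by
  simp [phiW]

lemma phiW_flatten (φ : Δ → Language A) (L : List (List Δ)) :
    phiW φ L.flatten = (L.map (phiW φ)).prod := by
  rw [phiW, List.map_flatten, List.prod_flatten, List.map_map]
  rfl

lemma Language.one_le_iff_nil_mem {l : Language A} : 1 ≤ l ↔ [] ∈ l :=
  Set.singleton_subset_iff

lemma phiL_le_iff {F : Set (List Δ)} {K : Language A} :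
    phiL φ F ≤ K ↔ ∀ u ∈ F, phiW φ u ≤ K :=
  Set.iUnion₂_subset_iff

lemma oneWordSummaries_iff {M : Set (List Δ)} :
    OneWordSummaries φ M ↔ M.Nonempty ∧ DirectedOn (phiW φ ⁻¹'o (· ≤ ·)) M := by
  simp only [OneWordSummaries, phiL_le_iff]
  refine ⟨fun h => ⟨?_, ?_⟩, fun ⟨hne, hdir⟩ F hFM hF => ?_⟩
  · obtain ⟨w, hw, -⟩ := h ∅ (Set.empty_subset _) Set.finite_empty
    exact ⟨w, hw⟩
  · intro u hu v hv
    obtain ⟨w, hw, hle⟩ := h {u, v} (Set.insert_subset hu (Set.singleton_subset_iff.2 hv))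
      (Set.toFinite _)
    exact ⟨w, hw, hle u (by simp), hle v (by simp)⟩
  · have : Nonempty M := hne.to_subtype
    obtain ⟨w, hw⟩ := (directedOn_iff_directed.1 hdir).finset_le
      (hF.preimage Subtype.val_injective.injOn).toFinset
    exact ⟨w, w.2, fun u hu => hw ⟨u, hFM hu⟩ (by simpa using hu)⟩

lemma oneWordSummaries_singleton (φ : Δ → Language A) (u : List Δ) :
    OneWordSummaries φ {u} :=
  oneWordSummaries_iff.2 ⟨Set.singleton_nonempty u, directedOn_singleton u⟩

lemma one_le_phiW_of_mem_kstar {S : Language Δ} (hS : ∀ w ∈ S, [] ∈ phiW φ w) {v : List Δ}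
    (hv : v ∈ S∗) : 1 ≤ phiW φ v := by
  obtain ⟨L, rfl, hL⟩ := mem_kstar.1 hv
  rw [phiW_flatten]
  refine List.one_le_prod_of_one_le fun l hl => ?_
  obtain ⟨w, hw, rfl⟩ := List.mem_map.1 hl
  exact one_le_iff_nil_mem.2 (hS w (hL w hw))

lemma oneWordSummaries_kstar {S : Language Δ} (hS : ∀ w ∈ S, [] ∈ phiW φ w) :
    OneWordSummaries φ (S∗ : Language Δ) := by
  refine oneWordSummaries_iff.2 ⟨⟨[], nil_mem_kstar S⟩, fun u hu v hv => ⟨u ++ v, ?_, ?_, ?_⟩⟩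
  · rw [← kstar_mul_kstar S]
    exact append_mem_mul hu hv
  · simpa [Order.Preimage] using le_mul_of_one_le_right' (one_le_phiW_of_mem_kstar hS hv)
  · simpa [Order.Preimage] using le_mul_of_one_le_left' (one_le_phiW_of_mem_kstar hS hu)

lemma OneWordSummaries.mul {M₁ M₂ : Language Δ} (h₁ : OneWordSummaries φ M₁)
    (h₂ : OneWordSummaries φ M₂) : OneWordSummaries φ (M₁ * M₂ : Language Δ) := by
  obtain ⟨⟨a, ha⟩, hdir₁⟩ := oneWordSummaries_iff.1 h₁
  obtain ⟨⟨b, hb⟩, hdir₂⟩ := oneWordSummaries_iff.1 h₂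
  refine oneWordSummaries_iff.2 ⟨⟨a ++ b, append_mem_mul ha hb⟩, ?_⟩
  rintro _ ⟨u₁, hu₁, u₂, hu₂, rfl⟩ _ ⟨v₁, hv₁, v₂, hv₂, rfl⟩
  obtain ⟨w₁, hw₁, hu₁w₁, hv₁w₁⟩ := hdir₁ u₁ hu₁ v₁ hv₁
  obtain ⟨w₂, hw₂, hu₂w₂, hv₂w₂⟩ := hdir₂ u₂ hu₂ v₂ hv₂
  refine ⟨w₁ ++ w₂, append_mem_mul hw₁ hw₂, ?_, ?_⟩
  · simpa [Order.Preimage] using mul_le_mul' hu₁w₁ hu₂w₂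
  · simpa [Order.Preimage] using mul_le_mul' hv₁w₁ hv₂w₂

lemma oneWordSummaries_list_prod {l : List (Language Δ)} (h : ∀ M ∈ l, OneWordSummaries φ M) :
    OneWordSummaries φ l.prod := by
  induction l with
  | nil => exact oneWordSummaries_singleton φ []
  | cons M l ih =>
    rw [List.prod_cons]
    exact (h M List.mem_cons_self).mul (ih fun M' hM' => h M' (List.mem_cons_of_mem M hM'))

end

/-- Sufficient condition for 1-word summaries: a language
`L = N₁S₁*N₂⋯N_mS_m*N_{m+1}` has 1-word summaries provided `ε ∈ φ(w)` for
every `w ∈ S_h` and every `h`. -/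
theorem stmt18 (Δ A : Type) (φ : Δ → Language A) (m : ℕ)
    (N : Fin (m + 1) → List Δ) (S : Fin m → Language Δ)
    (hε : ∀ h : Fin m, ∀ w ∈ S h, ([] : List A) ∈ phiW φ w) :
    OneWordSummaries φ
      ((List.ofFn fun h : Fin m =>
          ({N h.castSucc} : Language Δ) * (S h)∗).prod * {N (Fin.last m)}) := by
  refine OneWordSummaries.mul (oneWordSummaries_list_prod fun M hM => ?_)
    (oneWordSummaries_singleton φ _)
  obtain ⟨h, rfl⟩ := List.mem_ofFn.1 hM
  exact (oneWordSummaries_singleton φ _).mul (oneWordSummaries_kstar (hε h))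
end
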